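/- If N is an L_0^I-complete R-module, then for every R-module M the R-module Hom_R(M, N) of R-linear maps is L_0^I-complete. -/

import Mathlib

/-!
# Core definitions

For a commutative ring `R` and an ideal `I`, we construct the zeroth left derived
functor `L0 I` of the `I`-adic completion functor on `R`-modules, computed via the
canonical free presentation `(ker ε →₀ R) → (M →₀ R) → M → 0` of a module `M`
(the zeroth left derived functor of an additive functor `F` is
`coker (F P₁ → F P₀)` for any projective presentation `P₁ → P₀ → M → 0`),
together with the canonical natural map `η : M → L0 I M`.  A module is
`L0`-complete iff `η` is an isomorphism.
-/

open AdicCompletion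

noncomputable section

namespace LComplete

variable {R : Type} [CommRing R]

variable (R) in
/-- The augmentation `(M →₀ R) → M` of the canonical free presentation of `M`. -/
def eps (M : Type) [AddCommGroup M] [Module R M] : (M →₀ R) →ₗ[R] M :=
  Finsupp.linearCombination R id

lemma eps_surjective (M : Type) [AddCommGroup M] [Module R M] :
    Function.Surjective (eps R M) := fun m =>
  ⟨Finsupp.single m 1, by simp [eps]⟩

variable (R) in
/-- The first differential of the canonical free presentation of `M`. -/
def d1 (M : Type) [AddCommGroup M] [Module R M] :
    ((LinearMap.ker (eps R M)) →₀ R) →ₗ[R] (M →₀ R) :=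
  Finsupp.linearCombination R Subtype.val

lemma range_d1 (M : Type) [AddCommGroup M] [Module R M] :
    LinearMap.range (d1 R M) = LinearMap.ker (eps R M) := by
  rw [d1, Finsupp.range_linearCombination, Subtype.range_val, Submodule.span_eq]

variable (I : Ideal R)

/-- The image of the completed presentation map, i.e. the submodule by which one
quotients the completion of `M →₀ R` to obtain `L0 I M`. -/
def L0aux (M : Type) [AddCommGroup M] [Module R M] :
    Submodule R (AdicCompletion I (M →₀ R)) :=
  LinearMap.range ((AdicCompletion.map I (d1 R M)).restrictScalars R)

/-- The zeroth left derived functor of `I`-adic completion, computed as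
`coker((P₁)^∧_I → (P₀)^∧_I)` for the canonical free presentation `P₁ → P₀ → M → 0`. -/
def L0 (M : Type) [AddCommGroup M] [Module R M] : Type _ :=
  AdicCompletion I (M →₀ R) ⧸ L0aux I M

instance (M : Type) [AddCommGroup M] [Module R M] : AddCommGroup (L0 I M) :=
  inferInstanceAs (AddCommGroup (AdicCompletion I (M →₀ R) ⧸ L0aux I M))

instance (M : Type) [AddCommGroup M] [Module R M] : Module R (L0 I M) :=
  inferInstanceAs (Module R (AdicCompletion I (M →₀ R) ⧸ L0aux I M))

/-- The canonical map `(M →₀ R) → L0 I M`. -/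
def etaAux (M : Type) [AddCommGroup M] [Module R M] : (M →₀ R) →ₗ[R] L0 I M :=
  (L0aux I M).mkQ ∘ₗ AdicCompletion.of I (M →₀ R)

/-- Naturality of the completion map. -/
lemma map_of {M N : Type} [AddCommGroup M] [Module R M] [AddCommGroup N] [Module R N]
    (f : M →ₗ[R] N) (x : M) :
    AdicCompletion.map I f (AdicCompletion.of I M x) = AdicCompletion.of I N (f x) := by
  ext n
  rw [AdicCompletion.map_val_apply, AdicCompletion.of_apply, AdicCompletion.of_apply,
    Submodule.mkQ_apply, Submodule.mkQ_apply, LinearMap.reduceModIdeal_apply]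

lemma ker_eps_le_ker_etaAux (M : Type) [AddCommGroup M] [Module R M] :
    LinearMap.ker (eps R M) ≤ LinearMap.ker (etaAux I M) := by
  intro x hx
  rw [← range_d1] at hx
  obtain ⟨y, rfl⟩ := hx
  simp only [LinearMap.mem_ker, etaAux, LinearMap.comp_apply, ← map_of]
  exact (Submodule.Quotient.mk_eq_zero _).mpr ⟨AdicCompletion.of I _ y, rfl⟩

/-- The canonical natural map `η : M → L0 I M`; it sends `x` to the class of the
image in the completion of `(M →₀ R)` of the basis element of `x`. -/
def eta (M : Type) [AddCommGroup M] [Module R M] : M →ₗ[R] L0 I M where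
  toFun x := etaAux I M (Finsupp.single x 1)
  map_add' x y := by
    have h : (Finsupp.single (x + y) (1 : R) - (Finsupp.single x 1 + Finsupp.single y 1)) ∈
        LinearMap.ker (eps R M) := by
      simp [eps]
    have h2 := ker_eps_le_ker_etaAux I M h
    rw [LinearMap.mem_ker, map_sub, map_add, sub_eq_zero] at h2
    exact h2
  map_smul' r x := by
    have h : (Finsupp.single (r • x) (1 : R) - r • Finsupp.single x 1) ∈
        LinearMap.ker (eps R M) := by
      simp [eps]
    have h2 := ker_eps_le_ker_etaAux I M h
    rw [LinearMap.mem_ker, map_sub, map_smul, sub_eq_zero] at h2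
    simpa using h2

/-- A module `M` is `L0`-complete (`L`-complete) if the canonical natural map
`η : M → L0 I M` is an isomorphism. -/
def IsL0Complete (M : Type) [AddCommGroup M] [Module R M] : Prop :=
  Function.Bijective (eta I M)

/-! ## Functoriality of `L0` -/

section Functoriality

variable {M N P : Type} [AddCommGroup M] [Module R M] [AddCommGroup N] [Module R N]
  [AddCommGroup P] [Module R P]

variable (R) in
/-- The induced map on canonical free covers. -/
def fmap0 (f : M →ₗ[R] N) : (M →₀ R) →ₗ[R] (N →₀ R) := Finsupp.lmapDomain R R f

lemma eps_comp_fmap0 (f : M →ₗ[R] N) : (eps R N) ∘ₗ (fmap0 R f) = f ∘ₗ (eps R M) :=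
  Finsupp.lmapDomain_linearCombination R (v := id) (v' := id) ⇑f f (fun _ => rfl)

lemma eps_comp_d1 (M : Type) [AddCommGroup M] [Module R M] :
    (eps R M) ∘ₗ (d1 R M) = 0 := by
  ext y
  have h : d1 R M (Finsupp.single y 1) ∈ LinearMap.range (d1 R M) := ⟨_, rfl⟩
  rw [range_d1] at h
  simpa using h

/-- Key lemma: if a map into the free cover of `N` composes to zero with the
augmentation, then after completion its image lies in `L0aux I N`. -/
lemma mem_L0aux_of_aug_zero {A : Type} {φ : (A →₀ R) →ₗ[R] (N →₀ R)}
    (hφ : (eps R N) ∘ₗ φ = 0) (z : AdicCompletion I (A →₀ R)) :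
    (AdicCompletion.map I φ) z ∈ L0aux I N := by
  have hmem : ∀ a : A, φ (Finsupp.single a 1) ∈ LinearMap.ker (eps R N) := fun a =>
    LinearMap.mem_ker.mpr (LinearMap.congr_fun hφ (Finsupp.single a 1))
  set τ : (A →₀ R) →ₗ[R] ((LinearMap.ker (eps R N)) →₀ R) :=
    Finsupp.linearCombination R
      (fun a => Finsupp.single ⟨φ (Finsupp.single a 1), hmem a⟩ 1) with hτdef
  have hτ : (d1 R N) ∘ₗ τ = φ := by
    apply Finsupp.lhom_ext
    intro a b
    have h1 : (Finsupp.single a b : A →₀ R) = b • Finsupp.single a 1 := by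
      rw [Finsupp.smul_single, smul_eq_mul, mul_one]
    rw [LinearMap.comp_apply, h1, map_smul, map_smul, map_smul]
    congr 1
    simp [hτdef, d1, Finsupp.linearCombination_single]
  have h : AdicCompletion.map I φ z =
      AdicCompletion.map I (d1 R N) (AdicCompletion.map I τ z) := by
    rw [AdicCompletion.map_comp_apply, hτ]
  rw [h]
  exact ⟨AdicCompletion.map I τ z, rfl⟩

lemma map_add_apply (φ ψ : M →ₗ[R] N) (x : AdicCompletion I M) :
    AdicCompletion.map I (φ + ψ) x =
      AdicCompletion.map I φ x + AdicCompletion.map I ψ x := by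
  ext n
  obtain ⟨y, hy⟩ := Submodule.Quotient.mk_surjective _ (x.val n)
  have hval : (AdicCompletion.map I φ x + AdicCompletion.map I ψ x).val n =
      (AdicCompletion.map I φ x).val n + (AdicCompletion.map I ψ x).val n := rfl
  rw [hval, AdicCompletion.map_val_apply, AdicCompletion.map_val_apply,
    AdicCompletion.map_val_apply, ← hy, LinearMap.reduceModIdeal_apply,
    LinearMap.reduceModIdeal_apply, LinearMap.reduceModIdeal_apply]
  rw [LinearMap.add_apply, Submodule.Quotient.mk_add]

/-- The map induced by `f : M → N` on `L0`. -/
def L0map (f : M →ₗ[R] N) : L0 I M →ₗ[R] L0 I N :=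
  Submodule.mapQ (L0aux I M) (L0aux I N)
    ((AdicCompletion.map I (fmap0 R f)).restrictScalars R)
    (by
      rintro z ⟨w, rfl⟩
      show AdicCompletion.map I (fmap0 R f) (AdicCompletion.map I (d1 R M) w) ∈ L0aux I N
      rw [AdicCompletion.map_comp_apply]
      refine mem_L0aux_of_aug_zero I ?_ w
      rw [← LinearMap.comp_assoc, eps_comp_fmap0, LinearMap.comp_assoc, eps_comp_d1,
        LinearMap.comp_zero])

lemma L0map_mk (f : M →ₗ[R] N) (z : AdicCompletion I (M →₀ R)) :
    L0map I f (Submodule.Quotient.mk z) =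
      Submodule.Quotient.mk (AdicCompletion.map I (fmap0 R f) z) :=
  rfl

lemma L0map_id : L0map I (LinearMap.id : M →ₗ[R] M) = LinearMap.id := by
  apply Submodule.linearMap_qext
  refine LinearMap.ext fun z => ?_
  show L0map I LinearMap.id (Submodule.Quotient.mk z) = Submodule.Quotient.mk z
  rw [L0map_mk]
  congr 1
  have h : fmap0 R (LinearMap.id : M →ₗ[R] M) = LinearMap.id := by
    rw [fmap0, LinearMap.id_coe]
    exact Finsupp.lmapDomain_id R R
  rw [h, AdicCompletion.map_id]
  rfl


lemma map_sub_apply (φ ψ : M →ₗ[R] N) (x : AdicCompletion I M) :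
    AdicCompletion.map I (φ - ψ) x =
      AdicCompletion.map I φ x - AdicCompletion.map I ψ x := by
  have h := map_add_apply I (φ - ψ) ψ x
  rw [sub_add_cancel] at h
  rw [h, add_sub_cancel_right]

lemma L0map_comp (f : M →ₗ[R] N) (g : N →ₗ[R] P) :
    L0map I (g ∘ₗ f) = (L0map I g) ∘ₗ (L0map I f) := by
  apply Submodule.linearMap_qext
  refine LinearMap.ext fun z => ?_
  show L0map I (g ∘ₗ f) (Submodule.Quotient.mk z) =
    L0map I g (L0map I f (Submodule.Quotient.mk z))
  rw [L0map_mk, L0map_mk, L0map_mk, AdicCompletion.map_comp_apply]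
  congr 2
  rw [fmap0, fmap0, fmap0, LinearMap.coe_comp, ← Finsupp.lmapDomain_comp]

lemma L0map_add (f g : M →ₗ[R] N) : L0map I (f + g) = L0map I f + L0map I g := by
  apply Submodule.linearMap_qext
  refine LinearMap.ext fun z => ?_
  show L0map I (f + g) (Submodule.Quotient.mk z) =
    L0map I f (Submodule.Quotient.mk z) + L0map I g (Submodule.Quotient.mk z)
  rw [L0map_mk, L0map_mk, L0map_mk]
  erw [← Submodule.Quotient.mk_add]
  rw [show AdicCompletion.map I (fmap0 R f) z + AdicCompletion.map I (fmap0 R g) z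
      = AdicCompletion.map I (fmap0 R f + fmap0 R g) z from (map_add_apply I _ _ z).symm]
  rw [show AdicCompletion.map I (fmap0 R f + fmap0 R g) z =
      AdicCompletion.map I (fmap0 R (f + g)) z +
        AdicCompletion.map I (fmap0 R f + fmap0 R g - fmap0 R (f + g)) z by
    rw [← map_add_apply I]; congr 1; abel_nf]
  erw [Submodule.Quotient.mk_add, left_eq_add, Submodule.Quotient.mk_eq_zero]
  refine mem_L0aux_of_aug_zero I ?_ z
  rw [LinearMap.comp_sub, LinearMap.comp_add, eps_comp_fmap0, eps_comp_fmap0, eps_comp_fmap0,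
    LinearMap.add_comp, sub_eq_zero]

end Functoriality

open CategoryTheory

variable (R) in
/-- `L0` as a functor on the category of `R`-modules. -/
def L0Functor : ModuleCat R ⥤ ModuleCat R where
  obj M := ModuleCat.of R (L0 I M)
  map {M N} f := ModuleCat.ofHom (L0map I f.hom)
  map_id M := ModuleCat.hom_ext (L0map_id I)
  map_comp {M N P} f g := ModuleCat.hom_ext (L0map_comp I f.hom g.hom)

instance : (L0Functor R I).Additive where
  map_add {M N f g} := ModuleCat.hom_ext (L0map_add I f.hom g.hom)

lemma eta_naturality {M N : Type} [AddCommGroup M] [Module R M] [AddCommGroup N] [Module R N]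
    (f : M →ₗ[R] N) : (eta I N) ∘ₗ f = (L0map I f) ∘ₗ (eta I M) := by
  refine LinearMap.ext fun x => ?_
  show Submodule.Quotient.mk (AdicCompletion.of I (N →₀ R) (Finsupp.single (f x) 1)) =
    L0map I f (Submodule.Quotient.mk (AdicCompletion.of I (M →₀ R) (Finsupp.single x 1)))
  rw [L0map_mk, map_of]
  congr 2
  rw [fmap0]
  simpa using (Finsupp.mapDomain_single (f := ⇑f) (a := x) (b := (1 : R))).symm

section Complexes

variable {ι : Type} (c : ComplexShape ι)

/-- The canonical natural map `η : C → L0 C` of homological complexes, given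
degreewise by `eta`. -/
def etaCx (C : HomologicalComplex (ModuleCat R) c) :
    C ⟶ ((L0Functor R I).mapHomologicalComplex c).obj C where
  f i := ModuleCat.ofHom (eta I (C.X i))
  comm' i j _ := ModuleCat.hom_ext (eta_naturality I (C.d i j).hom).symm

end Complexes

end LComplete


/-! ## Auxiliary development for Statement 3 -/

namespace LComplete

open AdicCompletion Submodule Finset

section Series

variable {R : Type} [CommRing R] (I : Ideal R)
variable {P : Type} [AddCommGroup P] [Module R P]

lemma smul_quot_zero {n : ℕ} {r : R} (hr : r ∈ I ^ n)
    (q : P ⧸ (I ^ n • ⊤ : Submodule R P)) : r • q = 0 := by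
  obtain ⟨z, rfl⟩ := Submodule.mkQ_surjective _ q
  rw [Submodule.mkQ_apply, ← Submodule.Quotient.mk_smul]
  exact (Submodule.Quotient.mk_eq_zero _).mpr (Submodule.smul_mem_smul hr Submodule.mem_top)

/-- Sum of a series in the adic completion whose `k`-th term dies in level `n ≤ k`. -/
def aSum (f : ℕ → AdicCompletion I P) (hf : ∀ ⦃n k : ℕ⦄, n ≤ k → (f k).val n = 0) :
    AdicCompletion I P :=
  ⟨fun n => ∑ k ∈ Finset.range n, (f k).val n, by
    intro m n hmn
    rw [map_sum]
    have h1 : ∀ k ∈ Finset.range n, transitionMap I P hmn ((f k).val n) = (f k).val m :=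
      fun k _ => transitionMap_comp_eval_apply I P hmn (f k)
    rw [Finset.sum_congr rfl h1]
    exact (Finset.sum_subset (Finset.range_subset_range.mpr hmn)
      (fun k _ hk => hf (Nat.le_of_not_lt (fun h => hk (Finset.mem_range.mpr h))))).symm⟩

lemma aSum_val (f : ℕ → AdicCompletion I P) (hf : ∀ ⦃n k : ℕ⦄, n ≤ k → (f k).val n = 0)
    (n : ℕ) : (aSum I f hf).val n = ∑ k ∈ Finset.range n, (f k).val n := rfl

lemma pow_smul_val_zero {x : R} (hx : x ∈ I) (c : AdicCompletion I P) :
    ∀ ⦃n k : ℕ⦄, n ≤ k → ((x ^ k • c).val n = 0) := by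
  intro n k h
  rw [AdicCompletion.val_smul]
  exact smul_quot_zero I (Ideal.pow_le_pow_right h (Ideal.pow_mem_pow hx k)) _

lemma level_zero_eq {a b : P ⧸ (I ^ 0 • ⊤ : Submodule R P)} : a = b := by
  haveI : Subsingleton (P ⧸ (I ^ 0 • ⊤ : Submodule R P)) := by
    rw [Submodule.Quotient.subsingleton_iff, pow_zero, Ideal.one_eq_top,
      Submodule.top_smul]
  exact Subsingleton.elim a b

/-- Every element of the adic completion is the "sum" of a series with `k`-th
term in `I ^ k`. -/
lemma exists_series (z : AdicCompletion I P) :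
    ∃ p : ℕ → P, (∀ k, p k ∈ (I ^ k • ⊤ : Submodule R P)) ∧
      ∀ n, z.val n = Submodule.mkQ (I ^ n • ⊤ : Submodule R P)
        (∑ k ∈ Finset.range n, p k) := by
  have hl : ∀ n, ∃ v : P, Submodule.mkQ (I ^ n • ⊤ : Submodule R P) v = z.val n :=
    fun n => Submodule.mkQ_surjective _ (z.val n)
  choose l hl using hl
  set g : ℕ → P := fun n => match n with
    | 0 => 0
    | (m+1) => l (m+1) with hg
  have hgl : ∀ n, Submodule.mkQ (I ^ n • ⊤ : Submodule R P) (g n) = z.val n := by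
    intro n
    match n with
    | 0 => exact level_zero_eq I
    | (m+1) => exact hl (m+1)
  refine ⟨fun k => g (k+1) - g k, ?_, ?_⟩
  · intro k
    match k with
    | 0 =>
      have htop : (I ^ 0 • ⊤ : Submodule R P) = ⊤ := by
        rw [pow_zero, Ideal.one_eq_top, Submodule.top_smul]
      rw [htop]
      exact Submodule.mem_top
    | (m+1) =>
      have h1 : Submodule.mkQ (I ^ (m+1) • ⊤ : Submodule R P) (g (m+2) - g (m+1)) = 0 := by
        rw [map_sub, hgl (m+1)]
        have h2 : Submodule.mkQ (I ^ (m+1) • ⊤ : Submodule R P) (g (m+2)) =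
            transitionMap I P (Nat.le_succ (m+1)) (Submodule.mkQ _ (g (m+2))) := by
          exact rfl
        rw [h2, hgl (m+2), transitionMap_comp_eval_apply, sub_self]
      rw [Submodule.mkQ_apply, Submodule.Quotient.mk_eq_zero] at h1
      exact h1
  · intro n
    have hsum : ∑ k ∈ Finset.range n, (g (k+1) - g k) = g n - g 0 :=
      Finset.sum_range_sub g n
    have hg0 : g 0 = 0 := rfl
    rw [hsum, hg0, sub_zero, hgl n]

end Series

end LComplete

namespace LComplete

section Contra

open AdicCompletion Submodule Finset

variable {R : Type} [CommRing R] (I : Ideal R)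
variable {N : Type} [AddCommGroup N] [Module R N]

lemma reduceModIdeal_smul' {A B : Type} [AddCommGroup A] [Module R A]
    [AddCommGroup B] [Module R B] (f : A →ₗ[R] B) (J : Ideal R) (r : R)
    (q : A ⧸ (J • ⊤ : Submodule R A)) :
    f.reduceModIdeal J (r • q) = r • f.reduceModIdeal J q := by
  obtain ⟨v, rfl⟩ := Submodule.mkQ_surjective _ q
  rw [Submodule.mkQ_apply, ← Submodule.Quotient.mk_smul, LinearMap.reduceModIdeal_apply,
    LinearMap.reduceModIdeal_apply, map_smul, Submodule.Quotient.mk_smul]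

lemma eta_apply (a : N) :
    eta I N a = Submodule.Quotient.mk (AdicCompletion.of I (N →₀ R) (Finsupp.single a 1)) :=
  rfl

lemma eps_single (a : N) (c : R) : eps R N (Finsupp.single a c) = c • a := by
  simp [eps]

/-- In a complete module, geometric-type recursions can be solved. -/
lemma exists_geom_solution (hN : Function.Bijective (eta I N)) {x : R} (hx : x ∈ I)
    (b : ℕ → N) : ∃ h : ℕ → N, ∀ n, h n = b n + x • h (n + 1) := by
  set e := LinearEquiv.ofBijective (eta I N) hN with he
  have hsur : ∀ n, ∃ β : AdicCompletion I (N →₀ R),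
      (Submodule.Quotient.mk β : L0 I N) = eta I N (b n) :=
    fun n => Submodule.Quotient.mk_surjective _ _
  choose β hβ using hsur
  have hf : ∀ n : ℕ, ∀ ⦃m k : ℕ⦄, m ≤ k → ((x ^ k • β (n + k)).val m = 0) :=
    fun n m k hmk => pow_smul_val_zero I hx (β (n + k)) hmk
  set H : ℕ → AdicCompletion I (N →₀ R) :=
    fun n => aSum I (fun k => x ^ k • β (n + k)) (hf n) with hH
  refine ⟨fun n => e.symm (Submodule.Quotient.mk (H n)), fun n => ?_⟩
  apply e.injective
  have key : H n = β n + x • H (n + 1) := by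
    ext m
    rw [AdicCompletion.val_add_apply, AdicCompletion.val_smul_apply, hH]
    rw [aSum_val, aSum_val]
    have h1 : ∀ k, (x ^ k • β (n + k)).val m = x ^ k • (β (n + k)).val m :=
      fun k => AdicCompletion.val_smul_apply ..
    rw [Finset.sum_congr rfl (fun k _ => h1 k)]
    rw [Finset.smul_sum]
    have h2 : ∀ k ∈ Finset.range m,
        x • (x ^ k • β (n + 1 + k)).val m = x ^ (k+1) • (β (n + (k+1))).val m := by
      intro k _
      rw [AdicCompletion.val_smul_apply, smul_smul, ← pow_succ', show n + 1 + k = n + (k+1) from by omega]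
    rw [Finset.sum_congr rfl h2]
    have h4 : (β n).val m = x ^ 0 • (β (n + 0)).val m := by simp
    rw [h4, add_comm, ← Finset.sum_range_succ' (fun k => x ^ k • (β (n + k)).val m) m,
      Finset.sum_range_succ (fun k => x ^ k • (β (n + k)).val m) m]
    have h3 : x ^ m • (β (n + m)).val m = 0 :=
      smul_quot_zero I (Ideal.pow_mem_pow hx m) _
    rw [h3, add_zero]
  erw [e.apply_symm_apply, map_add, map_smul, e.apply_symm_apply]
  have he2 : e (b n) = eta I N (b n) := rfl
  erw [he2, ← hβ n, ← Submodule.Quotient.mk_smul, ← Submodule.Quotient.mk_add, key]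

/-- In a complete module, `x`-divisible towers vanish. -/
lemma tower_zero (hN : Function.Bijective (eta I N)) {x : R} (hx : x ∈ I)
    (h : ℕ → N) (hh : ∀ n, h n = x • h (n + 1)) : h 0 = 0 := by
  have hsur : ∀ n, ∃ γ : AdicCompletion I (N →₀ R),
      (Submodule.Quotient.mk γ : L0 I N) = eta I N (h n) :=
    fun n => Submodule.Quotient.mk_surjective _ _
  choose γ hγ using hsur
  have hw : ∀ n, γ n - x • γ (n + 1) ∈ L0aux I N := by
    intro n
    have h0 : (Submodule.Quotient.mk (γ n - x • γ (n + 1)) : L0 I N) = 0 := by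
      have hsub : eta I N (h n) - x • eta I N (h (n + 1)) =
          eta I N (h n - x • h (n + 1)) := by rw [map_sub, map_smul]
      have hz : h n - x • h (n + 1) = 0 := by rw [← hh n, sub_self]
      erw [Submodule.Quotient.mk_sub, Submodule.Quotient.mk_smul, hγ n, hγ (n+1), hsub, hz,
        _root_.map_zero]
      rfl
    exact (Submodule.Quotient.mk_eq_zero _).mp h0
  have hu : ∀ n, ∃ u : AdicCompletion I ((LinearMap.ker (eps R N)) →₀ R),
      ((AdicCompletion.map I (d1 R N)).restrictScalars R) u = γ n - x • γ (n + 1) :=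
    fun n => hw n
  choose u hu using hu
  have hfU : ∀ ⦃m k : ℕ⦄, m ≤ k → ((x ^ k • u k).val m = 0) :=
    fun m k hmk => pow_smul_val_zero I hx (u k) hmk
  set U := aSum I (fun k => x ^ k • u k) hfU with hU
  have hkey : ((AdicCompletion.map I (d1 R N)).restrictScalars R) U = γ 0 := by
    ext m
    rw [LinearMap.restrictScalars_apply, AdicCompletion.map_val_apply, hU, aSum_val, map_sum]
    have h1 : ∀ k ∈ Finset.range m,
        (d1 R N).reduceModIdeal (I ^ m) ((x ^ k • u k).val m) =
          x ^ k • (γ k).val m - x ^ (k+1) • (γ (k+1)).val m := by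
      intro k _
      rw [AdicCompletion.val_smul_apply, reduceModIdeal_smul']
      have h2 : (d1 R N).reduceModIdeal (I ^ m) ((u k).val m) =
          ((γ k - x • γ (k+1)).val m) :=
        congrArg (fun w : AdicCompletion I (N →₀ R) => w.val m) (hu k)
      rw [h2, AdicCompletion.val_sub_apply, AdicCompletion.val_smul_apply, smul_sub, smul_smul,
        ← pow_succ]
    rw [Finset.sum_congr rfl h1]
    rw [Finset.sum_range_sub' (fun k => x ^ k • (γ k).val m) m]
    have h3 : x ^ m • (γ m).val m = 0 := smul_quot_zero I (Ideal.pow_mem_pow hx m) _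
    rw [h3, sub_zero, pow_zero, one_smul]
  have hγ0 : γ 0 ∈ L0aux I N := ⟨U, hkey⟩
  have : eta I N (h 0) = 0 := by
    erw [← hγ 0, Submodule.Quotient.mk_eq_zero]
    exact hγ0
  have h0 := hN.injective (by rw [this, _root_.map_zero] : eta I N (h 0) = eta I N 0)
  exact h0

lemma tower_zero_all (hN : Function.Bijective (eta I N)) {x : R} (hx : x ∈ I)
    (h : ℕ → N) (hh : ∀ n, h n = x • h (n + 1)) : ∀ n, h n = 0 := by
  intro n
  have := tower_zero I hN hx (fun k => h (n + k)) (fun k => by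
    have := hh (n + k)
    rwa [show n + k + 1 = n + (k + 1) by omega] at this)
  simpa using this

variable (N) in
/-- The map `(a_n) ↦ (a_n - x • a_{n+1})` on sequences. -/
def Tmap (x : R) : (ℕ → N) →ₗ[R] (ℕ → N) where
  toFun f := fun n => f n - x • f (n + 1)
  map_add' f g := by funext n; simp [smul_add]; abel
  map_smul' r f := by funext n; simp [smul_sub, smul_comm x r]

lemma Tmap_bijective (hN : Function.Bijective (eta I N)) {x : R} (hx : x ∈ I) :
    Function.Bijective (Tmap N x) := by
  constructor
  · rw [injective_iff_map_eq_zero]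
    intro f hf
    funext n
    exact tower_zero_all I hN hx f (fun k => by
      have := congrFun hf k
      simp only [Tmap, LinearMap.coe_mk, AddHom.coe_mk, Pi.zero_apply] at this
      exact sub_eq_zero.mp this) n
  · intro b
    obtain ⟨h, hh⟩ := exists_geom_solution I hN hx b
    refine ⟨h, funext fun n => ?_⟩
    simp only [Tmap, LinearMap.coe_mk, AddHom.coe_mk]
    rw [hh n]
    abel

end Contra

end LComplete

namespace LComplete

section Pigeonhole

open Submodule Finset Pointwise

variable {R : Type} [CommRing R] {I : Ideal R}

lemma span_pow_eq_span_setpow (s : Set R) (k : ℕ) :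
    (Ideal.span s) ^ k = Ideal.span (s ^ k) := by
  induction k with
  | zero => rw [pow_zero, pow_zero, Ideal.span_one, Ideal.one_eq_top]
  | succ k ih => rw [pow_succ, pow_succ, ih, Ideal.span_mul_span']

lemma span_range_pow_le {r : ℕ} (hr : 0 < r) (x : Fin r → R) (m : ℕ) :
    (Ideal.span (Set.range x)) ^ (r * m) ≤ ⨆ i, Ideal.span {x i ^ m} := by
  rw [span_pow_eq_span_setpow]
  rw [Ideal.span_le]
  intro a ha
  rw [Set.mem_pow] at ha
  obtain ⟨f, hf⟩ := ha
  rw [List.prod_ofFn] at hf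
  have hc : ∀ i : Fin (r * m), ∃ j : Fin r, x j = (f i : R) := fun i => (f i).2
  choose c hc using hc
  haveI : Nonempty (Fin r) := ⟨⟨0, hr⟩⟩
  have hcard : (Finset.univ : Finset (Fin r)).card * m ≤
      (Finset.univ : Finset (Fin (r * m))).card := by
    simp [Finset.card_univ]
  obtain ⟨j, -, hj⟩ := Finset.exists_le_card_fiber_of_mul_le_card_of_maps_to
    (fun (a : Fin (r * m)) (_ : a ∈ Finset.univ) => Finset.mem_univ (c a))
    Finset.univ_nonempty hcard
  have hprod : a = ∏ i : Fin (r * m), x (c i) := by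
    rw [← hf]
    exact (Finset.prod_congr rfl (fun i _ => (hc i).symm)).symm |>.symm
  have hsplit : (∏ i : Fin (r * m), x (c i)) =
      (∏ i ∈ Finset.univ.filter (fun i => c i = j), x (c i)) *
        ∏ i ∈ Finset.univ.filter (fun i => ¬ c i = j), x (c i) :=
    (Finset.prod_filter_mul_prod_filter_not Finset.univ _ _).symm
  have hconst : (∏ i ∈ Finset.univ.filter (fun i => c i = j), x (c i)) =
      x j ^ (Finset.univ.filter (fun i => c i = j)).card := by
    rw [Finset.prod_congr rfl (fun i hi => by rw [(Finset.mem_filter.mp hi).2])]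
    exact Finset.prod_const (x j)
  have hmem : a ∈ Ideal.span {x j ^ m} := by
    rw [hprod, hsplit, hconst]
    obtain ⟨d, hd⟩ := Nat.exists_eq_add_of_le hj
    rw [hd, pow_add]
    exact Ideal.mem_span_singleton'.mpr
      ⟨x j ^ d * ∏ i ∈ Finset.univ.filter (fun i => ¬ c i = j), x (c i), by ring⟩
  exact (le_iSup (fun i => Ideal.span {x i ^ m}) j) hmem

variable {P : Type} [AddCommGroup P] [Module R P]

lemma exists_decomp {r : ℕ} (hr : 0 < r) (x : Fin r → R) (hx : Ideal.span (Set.range x) = I)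
    (m : ℕ) {p : P} (hp : p ∈ (I ^ (r * m) • ⊤ : Submodule R P)) :
    ∃ q : Fin r → P, p = ∑ i, x i ^ m • q i := by
  refine Submodule.smul_induction_on hp ?_ ?_
  · intro c hc v _
    have hc' : c ∈ ⨆ i, Ideal.span {x i ^ m} :=
      span_range_pow_le hr x m (by rwa [hx])
    rw [Submodule.mem_iSup_iff_exists_finsupp] at hc'
    obtain ⟨f, hf, hsum⟩ := hc'
    choose a ha using fun i => Ideal.mem_span_singleton'.mp (hf i)
    refine ⟨fun i => (a i) • v, ?_⟩
    have : c = ∑ i, f i := by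
      rw [← hsum, Finsupp.sum_fintype]
      exact fun _ => rfl
    rw [this, Finset.sum_smul]
    refine Finset.sum_congr rfl (fun i _ => ?_)
    rw [← ha i, mul_comm, mul_smul]
  · rintro p1 p2 ⟨q1, hq1⟩ ⟨q2, hq2⟩
    refine ⟨fun i => q1 i + q2 i, ?_⟩
    rw [hq1, hq2, ← Finset.sum_add_distrib]
    exact Finset.sum_congr rfl (fun i _ => (smul_add _ _ _).symm)

end Pigeonhole

end LComplete

namespace LComplete

section SeriesMem

open AdicCompletion Submodule Finset

variable {R : Type} [CommRing R] (I : Ideal R)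
variable {X : Type} [AddCommGroup X] [Module R X]

lemma of_ker_mem_L0aux {κ : X →₀ R} (hκ : κ ∈ LinearMap.ker (eps R X)) :
    AdicCompletion.of I (X →₀ R) κ ∈ L0aux I X := by
  refine ⟨AdicCompletion.of I _ (Finsupp.single (⟨κ, hκ⟩ : LinearMap.ker (eps R X)) 1), ?_⟩
  rw [LinearMap.restrictScalars_apply, map_of]
  congr 1
  simp [d1, Finsupp.linearCombination_single]

lemma d1_single (κ : LinearMap.ker (eps R X)) : d1 R X (Finsupp.single κ 1) = (κ : X →₀ R) := by
  simp [d1, Finsupp.linearCombination_single]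

/-- The key relation: if the recursion `h m = ε (q m) + x • h (m+1)` holds, then
the difference between `of (single (h 0) 1)` and the series `∑ x^m • of (q m)`
lies in `L0aux`. -/
lemma single_series_mem {x : R} (hx : x ∈ I) (q : ℕ → (X →₀ R)) (h : ℕ → X)
    (hrec : ∀ m, h m = eps R X (q m) + x • h (m + 1))
    (Z : AdicCompletion I (X →₀ R))
    (hZ : ∀ n, Z.val n = Submodule.mkQ (I ^ n • ⊤ : Submodule R (X →₀ R))
      (∑ m ∈ Finset.range n, x ^ m • q m)) :
    AdicCompletion.of I (X →₀ R) (Finsupp.single (h 0) 1) - Z ∈ L0aux I X := by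
  set ρ : ℕ → (X →₀ R) := fun m =>
    Finsupp.single (h m) 1 - q m - x • Finsupp.single (h (m + 1)) 1 with hρ
  have hρker : ∀ m, ρ m ∈ LinearMap.ker (eps R X) := by
    intro m
    rw [LinearMap.mem_ker, hρ]
    simp only [map_sub, map_smul, eps_single, one_smul]
    rw [hrec m]
    abel
  set u : ℕ → ((LinearMap.ker (eps R X)) →₀ R) :=
    fun m => Finsupp.single (⟨ρ m, hρker m⟩ : LinearMap.ker (eps R X)) 1 with hu
  have hfW : ∀ ⦃n k : ℕ⦄, n ≤ k →
      ((x ^ k • AdicCompletion.of I _ (u k)).val n = 0) :=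
    fun n k hnk => pow_smul_val_zero I hx _ hnk
  set W := aSum I (fun m => x ^ m • AdicCompletion.of I _ (u m)) hfW with hW
  refine ⟨W, ?_⟩
  rw [LinearMap.restrictScalars_apply]
  ext n
  rw [AdicCompletion.map_val_apply, hW, aSum_val, map_sum]
  have h1 : ∀ m ∈ Finset.range n,
      (d1 R X).reduceModIdeal (I ^ n) ((x ^ m • AdicCompletion.of I _ (u m)).val n) =
        (x ^ m • Submodule.Quotient.mk (Finsupp.single (h m) 1)
          - x ^ (m+1) • Submodule.Quotient.mk (Finsupp.single (h (m+1)) 1))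
          - x ^ m • (Submodule.Quotient.mk (q m) :
              (X →₀ R) ⧸ (I ^ n • ⊤ : Submodule R (X →₀ R))) := by
    intro m _
    rw [AdicCompletion.val_smul_apply, reduceModIdeal_smul', AdicCompletion.of_apply,
      Submodule.mkQ_apply, LinearMap.reduceModIdeal_apply, d1_single]
    have hval : ((⟨ρ m, hρker m⟩ : LinearMap.ker (eps R X)) : X →₀ R) =
        Finsupp.single (h m) 1 - q m - x • Finsupp.single (h (m + 1)) 1 := rfl
    rw [hval]
    simp only [Submodule.Quotient.mk_sub, Submodule.Quotient.mk_smul]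
    rw [smul_sub, smul_sub, smul_smul, ← pow_succ]
    abel
  rw [Finset.sum_congr rfl h1]
  rw [Finset.sum_sub_distrib]
  rw [Finset.sum_range_sub' (fun m => x ^ m • (Submodule.Quotient.mk (Finsupp.single (h m) 1) :
    (X →₀ R) ⧸ (I ^ n • ⊤ : Submodule R (X →₀ R)))) n]
  have h3 : x ^ n • (Submodule.Quotient.mk (Finsupp.single (h n) 1) :
      (X →₀ R) ⧸ (I ^ n • ⊤ : Submodule R (X →₀ R))) = 0 :=
    smul_quot_zero I (Ideal.pow_mem_pow hx n) _
  rw [h3, sub_zero, pow_zero, one_smul]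
  rw [AdicCompletion.val_sub_apply, AdicCompletion.of_apply, hZ n]
  rw [Submodule.mkQ_apply, Submodule.mkQ_apply]
  congr 1
  rw [← Submodule.mkQ_apply, map_sum]
  refine Finset.sum_congr rfl (fun m _ => ?_)
  rw [Submodule.mkQ_apply, Submodule.Quotient.mk_smul]

end SeriesMem

section HomTransfer

open AdicCompletion

variable {R : Type} [CommRing R] (I : Ideal R)
variable {N : Type} [AddCommGroup N] [Module R N]
variable {M : Type} [AddCommGroup M] [Module R M]

/-- Solving geometric recursions in `Hom(M, N)` for `N` complete. -/
lemma exists_geom_solution_hom (hN : Function.Bijective (eta I N)) {x : R} (hx : x ∈ I)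
    (b : ℕ → (M →ₗ[R] N)) :
    ∃ h : ℕ → (M →ₗ[R] N), ∀ n, h n = b n + x • h (n + 1) := by
  set e := LinearEquiv.ofBijective (Tmap N x) (Tmap_bijective I hN hx) with he
  set Ψ : M →ₗ[R] (ℕ → N) := e.symm.toLinearMap ∘ₗ LinearMap.pi (fun n => b n) with hΨ
  refine ⟨fun n => LinearMap.proj n ∘ₗ Ψ, fun n => ?_⟩
  ext m
  have h1 : Tmap N x (e.symm (LinearMap.pi (fun k => b k) m)) =
      LinearMap.pi (fun k => b k) m := by
    have := e.apply_symm_apply (LinearMap.pi (fun k => b k) m)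
    rwa [he, LinearEquiv.ofBijective_apply] at this
  have h2 := congrFun h1 n
  simp only [Tmap, LinearMap.coe_mk, AddHom.coe_mk, LinearMap.pi_apply] at h2
  simp only [LinearMap.add_apply, LinearMap.coe_comp, Function.comp_apply,
    LinearMap.proj_apply, LinearMap.smul_apply, hΨ, LinearMap.coe_comp,
    LinearEquiv.coe_coe, LinearMap.pi_apply]
  rw [← h2]
  abel

end HomTransfer

end LComplete

namespace LComplete

section Main

open AdicCompletion Submodule Finset

variable {R : Type} [CommRing R] (I : Ideal R)
variable {N : Type} [AddCommGroup N] [Module R N]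
variable {M : Type} [AddCommGroup M] [Module R M]

lemma eta_hom_injective (hN : Function.Bijective (eta I N)) :
    Function.Injective (eta I (M →ₗ[R] N)) := by
  intro h h' hhh
  ext m
  have hnat := eta_naturality I (LinearMap.applyₗ (M₂ := N) m)
  have h1 := LinearMap.congr_fun hnat h
  have h2 := LinearMap.congr_fun hnat h'
  simp only [LinearMap.comp_apply, LinearMap.applyₗ_apply_apply] at h1 h2
  exact hN.injective (by rw [h1, h2, hhh])

lemma eta_hom_surjective (hI : I.FG) (hN : Function.Bijective (eta I N)) :
    Function.Surjective (eta I (M →ₗ[R] N)) := by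
  intro y
  obtain ⟨z, rfl⟩ := Submodule.Quotient.mk_surjective (L0aux I (M →ₗ[R] N)) y
  obtain ⟨p, hpmem, hpval⟩ := exists_series I z
  obtain ⟨r₀, x₀, hx₀⟩ := Submodule.fg_iff_exists_fin_generating_family.mp hI
  set r : ℕ := r₀ + 1 with hrdef
  have hr : 0 < r := Nat.succ_pos r₀
  set x : Fin r → R := Fin.cons 0 x₀ with hxdef
  have hx : Ideal.span (Set.range x) = I := by
    rw [hxdef, show Set.range (Fin.cons 0 x₀ : Fin r → R) = {0} ∪ Set.range x₀ from
      Matrix.range_cons 0 x₀]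
    rw [Set.singleton_union]
    show Submodule.span R (insert 0 (Set.range x₀)) = I
    rw [Submodule.span_insert_zero]
    exact hx₀
  have hxi : ∀ i, x i ∈ I := fun i => by
    rw [← hx]; exact Ideal.subset_span (Set.mem_range_self i)
  set Pm : ℕ → ((M →ₗ[R] N) →₀ R) := fun m => ∑ j ∈ Finset.range r, p (r * m + j) with hPmdef
  have hPmmem : ∀ m, Pm m ∈ (I ^ (r * m) • ⊤ : Submodule R ((M →ₗ[R] N) →₀ R)) := by
    intro m
    refine Submodule.sum_mem _ (fun j _ => ?_)
    exact Submodule.smul_mono_left (Ideal.pow_le_pow_right (Nat.le_add_right _ _))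
      (hpmem (r * m + j))
  have hdec : ∀ m, ∃ q : Fin r → ((M →ₗ[R] N) →₀ R), Pm m = ∑ i, x i ^ m • q i :=
    fun m => exists_decomp hr x hx m (hPmmem m)
  choose qq hqq using hdec
  have hrecs : ∀ i : Fin r, ∃ h : ℕ → (M →ₗ[R] N),
      ∀ m, h m = eps R (M →ₗ[R] N) (qq m i) + x i • h (m + 1) := by
    intro i
    obtain ⟨h, hh⟩ := exists_geom_solution_hom I hN (hxi i)
      (fun m => eps R (M →ₗ[R] N) (qq m i))
    exact ⟨h, hh⟩
  choose hfun hrec using hrecs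
  have hfZ : ∀ i : Fin r, ∀ ⦃n k : ℕ⦄, n ≤ k →
      ((x i ^ k • AdicCompletion.of I ((M →ₗ[R] N) →₀ R) (qq k i)).val n = 0) :=
    fun i n k hnk => pow_smul_val_zero I (hxi i) _ hnk
  set Z : Fin r → AdicCompletion I ((M →ₗ[R] N) →₀ R) :=
    fun i => aSum I (fun m => x i ^ m • AdicCompletion.of I _ (qq m i)) (hfZ i) with hZdef
  have hZval : ∀ i n, (Z i).val n =
      Submodule.mkQ (I ^ n • ⊤ : Submodule R ((M →ₗ[R] N) →₀ R))
        (∑ m ∈ Finset.range n, x i ^ m • qq m i) := by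
    intro i n
    rw [hZdef]
    show ∑ m ∈ Finset.range n, (x i ^ m • AdicCompletion.of I _ (qq m i)).val n = _
    have h1 : ∀ m ∈ Finset.range n, (x i ^ m • AdicCompletion.of I _ (qq m i)).val n =
        Submodule.mkQ (I ^ n • ⊤ : Submodule R ((M →ₗ[R] N) →₀ R)) (x i ^ m • qq m i) := by
      intro m _
      rw [AdicCompletion.val_smul_apply, AdicCompletion.of_apply, Submodule.mkQ_apply,
        Submodule.mkQ_apply, Submodule.Quotient.mk_smul]
    rw [Finset.sum_congr rfl h1, ← map_sum]
  have hmem : ∀ i, AdicCompletion.of I ((M →ₗ[R] N) →₀ R)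
      (Finsupp.single (hfun i 0) 1) - Z i ∈ L0aux I (M →ₗ[R] N) :=
    fun i => single_series_mem I (hxi i) (fun m => qq m i) (hfun i) (hrec i) (Z i) (hZval i)
  have hsumZ : ∑ i, Z i = z := by
    ext n
    rw [AdicCompletion.val_sum_apply, Finset.sum_congr rfl (fun i _ => hZval i n), ← map_sum,
      hpval n]
    rw [Finset.sum_comm]
    rw [Finset.sum_congr rfl (fun m (_ : m ∈ Finset.range n) => (hqq m).symm)]
    have hblocks : ∑ m ∈ Finset.range n, Pm m = ∑ k ∈ Finset.range (r * n), p k := by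
      induction n with
      | zero => simp
      | succ n ih =>
        rw [Finset.sum_range_succ, ih, Nat.mul_succ, Finset.sum_range_add]
    rw [hblocks, map_sum, map_sum]
    refine (Finset.sum_subset (Finset.range_subset_range.mpr (Nat.le_mul_of_pos_left n hr))
      (fun k _ hk => ?_)).symm
    have hkn : n ≤ k := Nat.le_of_not_lt (fun hlt => hk (Finset.mem_range.mpr hlt))
    have : p k ∈ (I ^ n • ⊤ : Submodule R ((M →ₗ[R] N) →₀ R)) :=
      Submodule.smul_mono_left (Ideal.pow_le_pow_right hkn) (hpmem k)
    rw [Submodule.mkQ_apply]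
    exact (Submodule.Quotient.mk_eq_zero _).mpr this
  refine ⟨∑ i, hfun i 0, ?_⟩
  erw [eta_apply, Submodule.Quotient.eq]
  have hκ : (Finsupp.single (∑ i, hfun i 0) 1 - ∑ i, Finsupp.single (hfun i 0) 1 :
      (M →ₗ[R] N) →₀ R) ∈ LinearMap.ker (eps R (M →ₗ[R] N)) := by
    rw [LinearMap.mem_ker, map_sub, map_sum]
    simp only [eps_single, one_smul]
    rw [sub_self]
  have h1 : AdicCompletion.of I ((M →ₗ[R] N) →₀ R) (Finsupp.single (∑ i, hfun i 0) 1) -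
      ∑ i, AdicCompletion.of I ((M →ₗ[R] N) →₀ R) (Finsupp.single (hfun i 0) 1) ∈
        L0aux I (M →ₗ[R] N) := by
    rw [← map_sum, ← map_sub]
    exact of_ker_mem_L0aux I hκ
  have h2 : ∑ i, (AdicCompletion.of I ((M →ₗ[R] N) →₀ R) (Finsupp.single (hfun i 0) 1) - Z i) ∈
      L0aux I (M →ₗ[R] N) :=
    Submodule.sum_mem _ (fun i _ => hmem i)
  have heq : AdicCompletion.of I ((M →ₗ[R] N) →₀ R) (Finsupp.single (∑ i, hfun i 0) 1) - z =
      (AdicCompletion.of I ((M →ₗ[R] N) →₀ R) (Finsupp.single (∑ i, hfun i 0) 1) -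
        ∑ i, AdicCompletion.of I ((M →ₗ[R] N) →₀ R) (Finsupp.single (hfun i 0) 1)) +
        ∑ i, (AdicCompletion.of I ((M →ₗ[R] N) →₀ R) (Finsupp.single (hfun i 0) 1) - Z i) := by
    rw [Finset.sum_sub_distrib, ← hsumZ]
    abel
  rw [heq]
  exact Submodule.add_mem _ h1 h2

end Main

end LComplete

/-! ## STATEMENT 3 -/

open LComplete

/-- If `N` is an `L_0^I`-complete `R`-module, then for every `R`-module `M` the
`R`-module `Hom_R(M, N)` of `R`-linear maps is `L_0^I`-complete. -/
theorem statement3 {R : Type} [CommRing R] (I : Ideal R) (hI : I.FG)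
    (N : Type) [AddCommGroup N] [Module R N] (hN : IsL0Complete I N)
    (M : Type) [AddCommGroup M] [Module R M] :
    IsL0Complete I (M →ₗ[R] N) :=
  ⟨eta_hom_injective I hN, eta_hom_surjective I hI hN⟩
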